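/- arXiv:2102.11960 — 3 statements merged into one kernel-verified Lean document; each statement's English description precedes it below -/
import Mathlib

section
/- Single-server addition preserves quorum overlap: if m is a nonempty finite member set and x is a server not in m, then QuorumsOverlap(m, m ∪ {x}) holds, i.e., every majority subset of m intersects every majority subset of m ∪ {x}. -/
def Quorums {α : Type*} [DecidableEq α] (m : Finset α) : Set (Finset α) :=
  {q | q ⊆ m ∧ 2 * q.card > m.card}

def QuorumsOverlap {α : Type*} [DecidableEq α] (m1 m2 : Finset α) : Prop :=
  ∀ q1 ∈ Quorums m1, ∀ q2 ∈ Quorums m2, (q1 ∩ q2).Nonempty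

theorem quorumsOverlap_insert {α : Type*} [DecidableEq α]
    (m : Finset α) (x : α) (hm : m.Nonempty) (hx : x ∉ m) :
    QuorumsOverlap m (insert x m) := by
  rintro q1 ⟨h1s, h1c⟩ q2 ⟨h2s, h2c⟩
  rw [Finset.card_insert_of_notMem hx] at h2c
  by_contra h
  rw [Finset.not_nonempty_iff_eq_empty, ← Finset.disjoint_iff_inter_eq_empty] at h
  have hq2' : q2 \ {x} ⊆ m := by
    intro a ha
    simp only [Finset.mem_sdiff, Finset.mem_singleton] at ha
    rcases Finset.mem_insert.mp (h2s ha.1) with h' | h'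
    · exact absurd h' ha.2
    · exact h'
  have hdisj : Disjoint q1 (q2 \ {x}) := h.mono_right (Finset.sdiff_subset)
  have hcard : q1.card + (q2 \ {x}).card ≤ m.card := by
    rw [← Finset.card_union_of_disjoint hdisj]
    exact Finset.card_le_card (Finset.union_subset h1s hq2')
  have h2card : q2.card ≤ (q2 \ {x}).card + 1 := by
    have := Finset.card_sdiff_add_card_eq_card (Finset.sdiff_subset (s := q2) (t := {x}))
    have : q2.card ≤ (q2 \ {x}).card + (q2 ∩ {x}).card := by
      rw [← Finset.card_sdiff_add_card_inter q2 {x}]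
    calc q2.card ≤ (q2 \ {x}).card + (q2 ∩ {x}).card := this
      _ ≤ (q2 \ {x}).card + 1 := by
          gcongr
          exact (Finset.card_le_card (Finset.inter_subset_right)).trans (by simp)
  omega
end

section
/- Single-server removal preserves quorum overlap: if m is a finite member set with at least two elements and x ∈ m, then QuorumsOverlap(m, m \ {x}) holds. -/
theorem quorumsOverlap_erase {α : Type*} [DecidableEq α]
    (m : Finset α) (x : α) (hm : 2 ≤ m.card) (hx : x ∈ m) :
    QuorumsOverlap m (m.erase x) := by
  rintro q1 ⟨h1, c1⟩ q2 ⟨h2, c2⟩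
  rw [Finset.card_erase_of_mem hx] at c2
  by_contra h
  rw [Finset.not_nonempty_iff_eq_empty, ← Finset.disjoint_iff_inter_eq_empty] at h
  have hu : q1 ∪ q2 ⊆ m := Finset.union_subset h1 (h2.trans (Finset.erase_subset _ _))
  have := Finset.card_le_card hu
  rw [Finset.card_union_of_disjoint h] at this
  omega
end

section
/- More generally, if finite member sets m1 and m2 differ in at most one server (their symmetric difference has cardinality at most 1) and both are nonempty, then QuorumsOverlap(m1, m2) holds. -/
theorem quorumsOverlap_of_symmDiff_card_le_one {α : Type*} [DecidableEq α]
    (m1 m2 : Finset α)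
    (hdiff : ((m1 \ m2) ∪ (m2 \ m1)).card ≤ 1)
    (h1 : m1.Nonempty) (h2 : m2.Nonempty) :
    QuorumsOverlap m1 m2 := by
  rintro q1 ⟨hq1s, hq1c⟩ q2 ⟨hq2s, hq2c⟩
  by_contra hne
  have hdisj : Disjoint q1 q2 := by
    rw [Finset.disjoint_iff_inter_eq_empty, ← Finset.not_nonempty_iff_eq_empty]
    exact hne
  have hsub : q1 ∪ q2 ⊆ m1 ∪ m2 :=
    Finset.union_subset_union hq1s hq2s
  have h3 : (q1 ∪ q2).card = q1.card + q2.card := Finset.card_union_of_disjoint hdisj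
  have h4 : (q1 ∪ q2).card ≤ (m1 ∪ m2).card := Finset.card_le_card hsub
  have h5 : (m1 ∪ m2).card + (m1 ∩ m2).card = m1.card + m2.card :=
    Finset.card_union_add_card_inter m1 m2
  have h6 : m1 ∪ m2 ⊆ (m1 ∩ m2) ∪ ((m1 \ m2) ∪ (m2 \ m1)) := by
    intro x hx
    simp only [Finset.mem_union, Finset.mem_inter, Finset.mem_sdiff] at *
    tauto
  have h7 : (m1 ∪ m2).card ≤ (m1 ∩ m2).card + ((m1 \ m2) ∪ (m2 \ m1)).card :=
    (Finset.card_le_card h6).trans (Finset.card_union_le _ _)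
  omega
end
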